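/- Let n ≥ 2, let (T,σ) ∈ D_{n−1} be a decorated tree, and let (k,l,x), (k′,l′,x′) ∈ P_n satisfy k′ ≤ k and x_i ≤ x′_i for every i ∈ [n−1]. Write (T′,σ′) = h_n((T,σ),(k,l,x)) and (T″,σ″) = h_n((T,σ),(k′,l′,x′)). Then for every integer m ≥ 1 and every vertex v ∈ [n−1]: if d_{T′}(v) < m ≤ d_{T″}(v), then l′ = σ(v) and d_T(v) ≥ m − 1. -/

import Mathlib

/-!
Conventions: a rooted labeled tree on `[n]` is encoded on `Fin n` by a root `r` and a
parent map `p` with `p r = r` and every vertex reaching the root by iterating `p`.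
Stamps are 0-based: the paper's stamp of a vertex `v` is `(σ v : ℕ) + 1`; the paper's
parameters `k, l` are kept 1-based (as natural numbers), and `x i` stands for the paper's
`x_{i+1}`.  The pruning maps a decorated tree on `n + 1` vertices (the paper's `n - 1 ≥ 1`
vertices) to one on `n + 2` vertices, the new vertex being `Fin.last (n+1)`.
-/

/-- `(r, p)` encodes a rooted labeled tree on `Fin N`. -/
def IsRootedTree {N : ℕ} (r : Fin N) (p : Fin N → Fin N) : Prop :=
  p r = r ∧ ∀ v : Fin N, ∃ k : ℕ, p^[k] v = r

/-- `σ` is a stamp history for the tree `(r, p)`: stamps strictly increase away from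
the root. -/
def IsStampHistory {N : ℕ} (r : Fin N) (p : Fin N → Fin N) (σ : Equiv.Perm (Fin N)) : Prop :=
  ∀ v : Fin N, v ≠ r → σ (p v) < σ v

/-- Membership in the parameter set `P_{N+1}` for pruning a tree on `N` vertices:
either `1 ≤ l < k ≤ N + 1`, or `k = 1`, `l = 0` and `x_1 = 1`. -/
def PMem {N : ℕ} (k l : ℕ) (x : Fin N → Bool) : Prop :=
  (1 ≤ l ∧ l < k ∧ k ≤ N + 1) ∨ (k = 1 ∧ l = 0 ∧ ∀ h : 0 < N, x ⟨0, h⟩ = true)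

/-- The root of the pruned tree: the new vertex if `k = 1`, otherwise the old root. -/
def hRoot {n : ℕ} (r : Fin (n + 1)) (k : ℕ) : Fin (n + 2) :=
  if k = 1 then Fin.last (n + 1) else r.castSucc

open Fin.NatCast in
/-- The parent map of the pruned tree: vertices `v` with `x_{σ(v)} = 1` and `σ(v) ≥ k`
are rewired to the new vertex; the new vertex attaches to the vertex with stamp `l`
(if `k > 1`), and all other vertices keep their parent. -/
def hParent {n : ℕ} (r : Fin (n + 1)) (p : Fin (n + 1) → Fin (n + 1))
    (σ : Equiv.Perm (Fin (n + 1))) (k l : ℕ) (x : Fin (n + 1) → Bool) :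
    Fin (n + 2) → Fin (n + 2) := fun v =>
  if hv : v = Fin.last (n + 1) then
    if k = 1 then Fin.last (n + 1) else (σ.symm ((l - 1 : ℕ) : Fin (n + 1))).castSucc
  else
    (if x (σ (v.castPred hv)) = true ∧ k ≤ (σ (v.castPred hv) : ℕ) + 1 then Fin.last (n + 1)
     else (p (v.castPred hv)).castSucc)

open Fin.NatCast in
/-- The stamp history of the pruned tree: the new vertex gets stamp `k`, and the old
stamps `≥ k` are shifted up by one. -/
def hStamp {n : ℕ} (σ : Equiv.Perm (Fin (n + 1))) (k : ℕ) : Equiv.Perm (Fin (n + 2)) :=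
  (finSuccEquiv' (Fin.last (n + 1))).trans
    ((Equiv.optionCongr σ).trans (finSuccEquiv' (((k - 1 : ℕ) : Fin (n + 2)))).symm)


/-- The degree of `v` in the tree with parent map `p`: the number of vertices `u ≠ v`
whose parent is `v`. -/
noncomputable def degree {N : ℕ} (p : Fin N → Fin N) (v : Fin N) : ℕ :=
  Nat.card {u : Fin N // u ≠ v ∧ p u = v}

/-!
The old vertex `v` keeps exactly those children `u` of `T` that are not rewired to the new
vertex (rewiring happens when `x_{σ(u)} = 1` and `σ(u) ≥ k`), and gains the new vertex as a
child iff `k > 1` and `l = σ(v)`. Lowering `k` and raising `x` only rewires more children, so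
the surviving children under `(k', l', x')` are among those under `(k, l, x)`. Hence the degree
under `(k', l', x')` can exceed the one under `(k, l, x)` only through the new vertex, which
forces `l' = σ(v)`, and then `m - 1` is bounded by the surviving children, hence by `d_T(v)`.
-/

open Fin.NatCast Finset

def survivingChildren {N : ℕ} (p : Fin N → Fin N) (σ : Equiv.Perm (Fin N)) (k : ℕ)
    (x : Fin N → Bool) (v : Fin N) : Finset (Fin N) :=
  {u | u ≠ v ∧ p u = v ∧ ¬(x (σ u) = true ∧ k ≤ (σ u : ℕ) + 1)}

lemma degree_eq_card_filter {N : ℕ} (p : Fin N → Fin N) (v : Fin N) :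
    degree p v = #{u | u ≠ v ∧ p u = v} := by
  rw [degree, Nat.card_eq_fintype_card, Fintype.card_subtype]

lemma card_survivingChildren_le_degree {N : ℕ} (p : Fin N → Fin N) (σ : Equiv.Perm (Fin N))
    (k : ℕ) (x : Fin N → Bool) (v : Fin N) :
    #(survivingChildren p σ k x v) ≤ degree p v := by
  rw [degree_eq_card_filter]
  exact card_le_card (monotone_filter_right _ fun _ _ h => ⟨h.1, h.2.1⟩)

lemma survivingChildren_anti {N : ℕ} (p : Fin N → Fin N) (σ : Equiv.Perm (Fin N))
    {k k' : ℕ} {x x' : Fin N → Bool} (v : Fin N) (hk : k' ≤ k)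
    (hx : ∀ i, x i = true → x' i = true) :
    survivingChildren p σ k' x' v ⊆ survivingChildren p σ k x v :=
  monotone_filter_right _ fun _ _ h => ⟨h.1, h.2.1, fun h' => h.2.2 ⟨hx _ h'.1, hk.trans h'.2⟩⟩

lemma degree_hParent_castSucc {n : ℕ} (r : Fin (n + 1)) (p : Fin (n + 1) → Fin (n + 1))
    (σ : Equiv.Perm (Fin (n + 1))) (k l : ℕ) (x : Fin (n + 1) → Bool) (v : Fin (n + 1)) :
    degree (hParent r p σ k l x) v.castSucc =
      #(survivingChildren p σ k x v) +
        if k ≠ 1 ∧ σ.symm ((l - 1 : ℕ) : Fin (n + 1)) = v then 1 else 0 := by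
  have hlast : (Fin.last (n + 1) : Fin (n + 2)) ≠ v.castSucc := (Fin.castSucc_lt_last v).ne'
  rw [degree_eq_card_filter, card_filter, Fin.sum_univ_castSucc, survivingChildren, card_filter]
  congr 1
  · refine sum_congr rfl fun u _ => ?_
    simp only [hParent, dif_neg (Fin.castSucc_lt_last u).ne, Fin.castPred_castSucc]
    by_cases hc : x (σ u) = true ∧ k ≤ (σ u : ℕ) + 1
    · simp [hc, hlast]
    · simp [hc, Fin.castSucc_inj]
  · by_cases hk : k = 1 <;> simp [hParent, hk, hlast, Fin.castSucc_inj]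

lemma PMem.eq_stamp_add_one {n : ℕ} {k l : ℕ} {x : Fin (n + 1) → Bool} (hP : PMem k l x)
    (hk : k ≠ 1) {σ : Equiv.Perm (Fin (n + 1))} {v : Fin (n + 1)}
    (hv : σ.symm ((l - 1 : ℕ) : Fin (n + 1)) = v) : l = (σ v : ℕ) + 1 := by
  obtain ⟨hl, hlk, hkn⟩ := hP.resolve_right fun h => hk h.1
  rw [← hv, Equiv.apply_symm_apply, Fin.val_natCast, Nat.mod_eq_of_lt (by omega)]
  omega

theorem pruning_coupling_analysis_general (n : ℕ)
    (r : Fin (n + 1)) (p : Fin (n + 1) → Fin (n + 1)) (σ : Equiv.Perm (Fin (n + 1)))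
    (k l : ℕ) (x : Fin (n + 1) → Bool) (k' l' : ℕ) (x' : Fin (n + 1) → Bool)
    (hP' : PMem k' l' x')
    (hk : k' ≤ k) (hx : ∀ i, x i = true → x' i = true)
    (m : ℕ) (v : Fin (n + 1))
    (hlt : degree (hParent r p σ k l x) v.castSucc < m)
    (hge : m ≤ degree (hParent r p σ k' l' x') v.castSucc) :
    l' = (σ v : ℕ) + 1 ∧ m - 1 ≤ degree p v := by
  rw [degree_hParent_castSucc] at hlt hge
  have hsub := card_le_card (survivingChildren_anti p σ v hk hx)
  have hattach : k' ≠ 1 ∧ σ.symm ((l' - 1 : ℕ) : Fin (n + 1)) = v := by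
    by_contra h
    rw [if_neg h] at hge
    omega
  rw [if_pos hattach] at hge
  have hdeg := card_survivingChildren_le_degree p σ k' x' v
  exact ⟨hP'.eq_stamp_add_one hattach.1 hattach.2, by omega⟩

/-- Proposition 5.2: analysis of the coupling.
Let `(T, σ)` be a decorated tree on `n + 1` vertices and `(k, l, x), (k', l', x')`
parameter triples in `P` with `k' ≤ k` and `x ≤ x'` coordinatewise.  If for some vertex
`v` and some `m ≥ 1` the degree of `v` in `h((T,σ),(k,l,x))` is `< m` while its degree in
`h((T,σ),(k',l',x'))` is `≥ m`, then `l'` equals the (1-based) stamp of `v` and the degree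
of `v` in `T` is at least `m - 1`. -/
theorem pruning_coupling_analysis (n : ℕ)
    (r : Fin (n + 1)) (p : Fin (n + 1) → Fin (n + 1)) (σ : Equiv.Perm (Fin (n + 1)))
    (hT : IsRootedTree r p) (hσ : IsStampHistory r p σ)
    (k l : ℕ) (x : Fin (n + 1) → Bool) (k' l' : ℕ) (x' : Fin (n + 1) → Bool)
    (hP : PMem k l x) (hP' : PMem k' l' x')
    (hk : k' ≤ k) (hx : ∀ i, x i = true → x' i = true)
    (m : ℕ) (hm : 1 ≤ m) (v : Fin (n + 1))
    (hlt : degree (hParent r p σ k l x) v.castSucc < m)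
    (hge : m ≤ degree (hParent r p σ k' l' x') v.castSucc) :
    l' = (σ v : ℕ) + 1 ∧ m - 1 ≤ degree p v :=
  pruning_coupling_analysis_general n r p σ k l x k' l' x' hP' hk hx m v hlt hge
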